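/- Let E ∈ ℝ^{p×n} have full column rank and let M := I - E(EᵀE)⁻¹Eᵀ. Suppose Q̃ ∈ ℝ^{p×p} is symmetric positive definite, Φ ∈ ℝ^{p×p} is symmetric, and there exist ρ ∈ ℝ and η > 0 such that Φ + ρM ≺ 0 and Q̃M + MQ̃ ⪰ ηM. Then Φ ≺ (|ρ|/η)(Q̃M + MQ̃), and consequently EᵀQ̃⁻¹ΦQ̃⁻¹E ≺ 0. -/

import Mathlib

/-!
`M` is the orthogonal projection onto the orthogonal complement of the column space of `E`,
so `M ⪰ 0`. With `c = |ρ|/η`,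
`c(Q̃M + MQ̃) - Φ = c(Q̃M + MQ̃ - ηM) + (|ρ| + ρ)M - (Φ + ρM)`
is positive semidefinite plus positive semidefinite plus positive definite. Congruence by the
injective matrix `Q̃⁻¹E` preserves positive definiteness and annihilates `Q̃M + MQ̃`, because
`ME = 0` and `EᵀM = 0`; what remains is `-EᵀQ̃⁻¹ΦQ̃⁻¹E`.
-/

open Matrix

namespace Matrix

theorem posDef_smul_sub_of_posDef_neg_add_smul {m : Type*} {Φ P S : Matrix m m ℝ} {ρ η : ℝ}
    (hη : 0 < η) (hP : P.PosSemidef) (h1 : (-(Φ + ρ • P)).PosDef)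
    (h2 : (S - η • P).PosSemidef) : ((|ρ| / η) • S - Φ).PosDef := by
  have hsplit : (|ρ| / η) • S - Φ = (|ρ| / η) • (S - η • P) + (|ρ| + ρ) • P + -(Φ + ρ • P) := by
    rw [smul_sub, smul_smul, div_mul_cancel₀ _ hη.ne']
    module
  rw [hsplit]
  refine .posSemidef_add (.add (h2.smul (by positivity)) (hP.smul ?_)) h1
  linarith [neg_abs_le ρ]

theorem mulVec_injective_of_rank_eq_card {K m n : Type*} [Field K] [Fintype n]
    {A : Matrix m n K} (h : A.rank = Fintype.card n) : Function.Injective A.mulVec := by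
  have hker := A.mulVecLin.finrank_range_add_finrank_ker
  rw [← rank, h, Module.finrank_fintype_fun_eq_card, add_eq_left,
    Submodule.finrank_eq_zero] at hker
  exact LinearMap.ker_eq_bot.mp hker

theorem isUnit_of_rank_eq_card {K n : Type*} [Field K] [Fintype n] [DecidableEq n]
    {A : Matrix n n K} (h : A.rank = Fintype.card n) : IsUnit A :=
  mulVec_injective_iff_isUnit.mp (mulVec_injective_of_rank_eq_card h)

theorem transpose_mul_inv_mul_add_mul_inv_mul_eq_zero {R m n : Type*} [CommRing R]
    [Fintype m] [DecidableEq m] {Q P : Matrix m m R} {E : Matrix m n R} (hQ : IsUnit Q.det)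
    (hP : Pᵀ = P) (hPE : P * E = 0) : Eᵀ * Q⁻¹ * (Q * P + P * Q) * Q⁻¹ * E = 0 := by
  have hEP : Eᵀ * P = 0 := by rw [← hP, ← transpose_mul, hPE, transpose_zero]
  simp only [Matrix.mul_add, Matrix.add_mul, Matrix.mul_assoc]
  rw [← Matrix.mul_assoc Q⁻¹ Q, nonsing_inv_mul _ hQ, Matrix.one_mul, ← Matrix.mul_assoc Eᵀ P,
    hEP, ← Matrix.mul_assoc Q Q⁻¹, mul_nonsing_inv _ hQ, Matrix.one_mul, hPE]
  simp

theorem posDef_neg_transpose_mul_inv_mul_mul_inv_mul {m n : Type*} [Fintype m] [DecidableEq m]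
    [Fintype n] {Q P Φ : Matrix m m ℝ} {E : Matrix m n ℝ} {c : ℝ} (hQ : Q.PosDef)
    (hP : Pᵀ = P) (hPE : P * E = 0) (hE : Function.Injective E.mulVec)
    (hA : (c • (Q * P + P * Q) - Φ).PosDef) : (-(Eᵀ * Q⁻¹ * Φ * Q⁻¹ * E)).PosDef := by
  have hB : Function.Injective (Q⁻¹ * E).mulVec := by
    simpa only [Function.comp_def, mulVec_mulVec] using
      (mulVec_injective_of_isUnit hQ.inv.isUnit).comp hE
  have hQinv : Q⁻¹ᵀ = Q⁻¹ := by
    rw [transpose_nonsing_inv, ← conjTranspose_eq_transpose_of_trivial, hQ.isHermitian.eq]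
  convert hA.conjTranspose_mul_mul_same hB using 1
  rw [conjTranspose_eq_transpose_of_trivial, transpose_mul, hQinv]
  simp only [Matrix.mul_sub, Matrix.sub_mul, Matrix.mul_smul, Matrix.smul_mul,
    ← Matrix.mul_assoc, transpose_mul_inv_mul_add_mul_inv_mul_eq_zero hQ.det_pos.ne'.isUnit hP hPE,
    smul_zero, zero_sub]

section residualProjection

variable {R m n : Type*} [CommRing R] [Fintype m] [DecidableEq m] [Fintype n] [DecidableEq n]

/-- The matrix `M` of the paper: the orthogonal projection onto the orthogonal complement of
the column space of `E` (when `Eᵀ * E` is invertible). -/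
noncomputable def residualProjection (E : Matrix m n R) : Matrix m m R :=
  1 - E * (Eᵀ * E)⁻¹ * Eᵀ

theorem transpose_residualProjection (E : Matrix m n R) :
    (residualProjection E)ᵀ = residualProjection E := by
  simp [residualProjection, transpose_nonsing_inv, Matrix.mul_assoc]

theorem residualProjection_mul {E : Matrix m n R} (hE : IsUnit (Eᵀ * E)) :
    residualProjection E * E = 0 := by
  rw [residualProjection, Matrix.sub_mul, Matrix.one_mul, Matrix.mul_assoc _ Eᵀ,
    Matrix.mul_assoc, nonsing_inv_mul _ ((isUnit_iff_isUnit_det _).mp hE), Matrix.mul_one,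
    sub_self]

theorem residualProjection_mul_self {E : Matrix m n R} (hE : IsUnit (Eᵀ * E)) :
    residualProjection E * residualProjection E = residualProjection E := by
  conv_lhs => enter [2]; rw [residualProjection]
  rw [Matrix.mul_sub, Matrix.mul_one, ← Matrix.mul_assoc, ← Matrix.mul_assoc,
    residualProjection_mul hE, Matrix.zero_mul, Matrix.zero_mul, sub_zero]

theorem posSemidef_residualProjection {E : Matrix m n ℝ} (hE : IsUnit (Eᵀ * E)) :
    (residualProjection E).PosSemidef := by
  rw [← residualProjection_mul_self hE]
  nth_rw 1 [← transpose_residualProjection, ← conjTranspose_eq_transpose_of_trivial]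
  exact posSemidef_conjTranspose_mul_self _

end residualProjection

end Matrix

theorem stmt_17_general (p n : ℕ) (E : Matrix (Fin p) (Fin n) ℝ)
    (hE : E.rank = n)
    (Qt : Matrix (Fin p) (Fin p) ℝ) (hQt : Qt.PosDef)
    (Phi : Matrix (Fin p) (Fin p) ℝ)
    (ρ η : ℝ) (hη : 0 < η)
    (M : Matrix (Fin p) (Fin p) ℝ) (hM : M = 1 - E * (Eᵀ * E)⁻¹ * Eᵀ)
    (h1 : (-(Phi + ρ • M)).PosDef)
    (h2 : (Qt * M + M * Qt - η • M).PosSemidef) :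
    ((|ρ| / η) • (Qt * M + M * Qt) - Phi).PosDef ∧
    (-(Eᵀ * Qt⁻¹ * Phi * Qt⁻¹ * E)).PosDef := by
  have hEinj : Function.Injective E.mulVec :=
    mulVec_injective_of_rank_eq_card (by rw [hE, Fintype.card_fin])
  have hEE : IsUnit (Eᵀ * E) :=
    isUnit_of_rank_eq_card (by rw [rank_transpose_mul_self, hE, Fintype.card_fin])
  change M = residualProjection E at hM
  subst hM
  have hA := posDef_smul_sub_of_posDef_neg_add_smul hη (posSemidef_residualProjection hEE) h1 h2
  exact ⟨hA, posDef_neg_transpose_mul_inv_mul_mul_inv_mul hQt (transpose_residualProjection E)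
    (residualProjection_mul hEE) hEinj hA⟩

theorem stmt_17 (p n : ℕ) (E : Matrix (Fin p) (Fin n) ℝ)
    (hE : E.rank = n)
    (Qt : Matrix (Fin p) (Fin p) ℝ) (hQt : Qt.PosDef)
    (Phi : Matrix (Fin p) (Fin p) ℝ) (hPhi : Phiᵀ = Phi)
    (ρ η : ℝ) (hη : 0 < η)
    (M : Matrix (Fin p) (Fin p) ℝ) (hM : M = 1 - E * (Eᵀ * E)⁻¹ * Eᵀ)
    (h1 : (-(Phi + ρ • M)).PosDef)
    (h2 : (Qt * M + M * Qt - η • M).PosSemidef) :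
    ((|ρ| / η) • (Qt * M + M * Qt) - Phi).PosDef ∧
    (-(Eᵀ * Qt⁻¹ * Phi * Qt⁻¹ * E)).PosDef :=
  stmt_17_general p n E hE Qt hQt Phi ρ η hη M hM h1 h2
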